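/- Let x_1 < x_2 < ⋯ < x_n be distinct points in [0,1] and let Y_1,…,Y_n ∈ ℝ be arbitrary. Then for every k ≥ n + 3 there exist coefficients a_1,…,a_k, b_1,…,b_k ∈ ℝ such that Σ_{j=1}^k a_j σ_relu(x_i + b_j) = Y_i for every i = 1,…,n; consequently, if the Y_i are independent N(0,1) random variables and m̂ is any least-squares minimizer over {Σ_{j=1}^k a_j σ_relu(x + b_j)} with k ≥ n + 3, then m̂(x_i) = Y_i for all i and E[(1/n)Σ_{i=1}^n m̂(x_i)²] = 1. -/

import Mathlib

open MeasureTheory ProbabilityTheory Real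
open scoped ENNReal NNReal

lemma aux_sq_exp_int : Integrable (fun x : ℝ => x ^ 2 * rexp (-2⁻¹ * x ^ 2)) := by
  have hb : (0:ℝ) < 2⁻¹ := by norm_num
  have h := integrable_rpow_mul_exp_neg_mul_sq hb (s := 2) (by norm_num)
  have h2 : ∀ x : ℝ, x ^ (2:ℝ) = x ^ 2 := fun x => by
    rw [show (2:ℝ) = ((2:ℕ):ℝ) by norm_num, Real.rpow_natCast]
  simpa only [h2] using h

lemma aux_sq_gauss : ∫ x : ℝ, x ^ 2 * rexp (-2⁻¹ * x ^ 2) = Real.sqrt (2 * π) := by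
  have hb : (0:ℝ) < 2⁻¹ := by norm_num
  have hint2 := aux_sq_exp_int
  have hint1 : Integrable (fun x : ℝ => rexp (-2⁻¹ * x ^ 2)) := integrable_exp_neg_mul_sq hb
  have hderiv : ∀ x : ℝ, HasDerivAt (fun x : ℝ => x * rexp (-2⁻¹ * x ^ 2))
      (rexp (-2⁻¹ * x ^ 2) - x ^ 2 * rexp (-2⁻¹ * x ^ 2)) x := by
    intro x
    have h1 : HasDerivAt (fun x : ℝ => -2⁻¹ * x ^ 2) (-2⁻¹ * (2 * x)) x := by
      simpa using (hasDerivAt_pow 2 x).const_mul (-2⁻¹ : ℝ)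
    have h3 := (hasDerivAt_id x).mul h1.exp
    refine h3.congr_deriv ?_
    simp only [one_mul, id_eq]
    ring_nf
  have h0 := integral_eq_zero_of_hasDerivAt_of_integrable hderiv (hint1.sub hint2)
    (integrable_mul_exp_neg_mul_sq hb)
  rw [integral_sub hint1 hint2, sub_eq_zero] at h0
  rw [← h0, integral_gaussian]
  congr 1
  field_simp

lemma aux_pdf (x : ℝ) : ((gaussianPDFReal 0 1 x).toNNReal : ℝ)
    = (Real.sqrt (2 * π))⁻¹ * rexp (-2⁻¹ * x ^ 2) := by
  rw [Real.coe_toNNReal _ (gaussianPDFReal_nonneg _ _ _)]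
  simp only [gaussianPDFReal, NNReal.coe_one, mul_one, sub_zero]
  congr 1
  ring

lemma aux_gauss_eq : gaussianReal 0 1
    = (volume : Measure ℝ).withDensity (fun x => ((gaussianPDFReal 0 1 x).toNNReal : ℝ≥0∞)) := by
  rw [gaussianReal_of_var_ne_zero 0 one_ne_zero]
  rfl

lemma aux_int_sq_gauss : ∫ x, x ^ 2 ∂(gaussianReal 0 1) = 1 := by
  rw [aux_gauss_eq,
    integral_withDensity_eq_integral_smul ((measurable_gaussianPDFReal 0 1).real_toNNReal)]
  calc ∫ x : ℝ, (gaussianPDFReal 0 1 x).toNNReal • x ^ 2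
      = ∫ x : ℝ, (Real.sqrt (2 * π))⁻¹ * (x ^ 2 * rexp (-2⁻¹ * x ^ 2)) := by
        congr 1; ext x
        rw [NNReal.smul_def, smul_eq_mul, aux_pdf x]; ring
    _ = (Real.sqrt (2 * π))⁻¹ * Real.sqrt (2 * π) := by
        rw [MeasureTheory.integral_const_mul, aux_sq_gauss]
    _ = 1 := by
        rw [inv_mul_cancel₀]
        positivity

lemma aux_integrable_sq_gauss : Integrable (fun x : ℝ => x ^ 2) (gaussianReal 0 1) := by
  rw [aux_gauss_eq,
    integrable_withDensity_iff_integrable_smul ((measurable_gaussianPDFReal 0 1).real_toNNReal)]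
  have := aux_sq_exp_int.const_mul (Real.sqrt (2 * π))⁻¹
  convert this using 2 with x
  · rfl
  rw [NNReal.smul_def, smul_eq_mul, aux_pdf x]; ring

lemma aux_interp (n : ℕ) (x : Fin n → ℝ) (hmono : StrictMono x)
    (hx : ∀ i, x i ∈ Set.Icc (0 : ℝ) 1) (Yv : Fin n → ℝ) :
    ∃ a b : Fin n → ℝ, ∀ i : Fin n, ∑ j : Fin n, a j * max (x i + b j) 0 = Yv i := by
  set b0 : Fin n → ℝ := fun j => if (j : ℕ) = 0 then 1
    else -(x ⟨(j : ℕ) - 1, Nat.lt_of_le_of_lt (Nat.pred_le _) j.isLt⟩) with hb0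
  set M : Matrix (Fin n) (Fin n) ℝ := Matrix.of fun i j => max (x i + b0 j) 0 with hM
  have htri : ∀ i j : Fin n, i < j → M i j = 0 := by
    intro i j hij
    have hij' : (i : ℕ) < (j : ℕ) := hij
    have hj0 : (j : ℕ) ≠ 0 := by omega
    have : x i ≤ x ⟨(j : ℕ) - 1, Nat.lt_of_le_of_lt (Nat.pred_le _) j.isLt⟩ :=
      hmono.monotone (by simp only [Fin.le_def]; omega)
    simp only [hM, hb0, Matrix.of_apply, if_neg hj0]
    rw [max_eq_right]
    linarith
  have hdiag : ∀ i : Fin n, 0 < M i i := by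
    intro i
    by_cases hi : (i : ℕ) = 0
    · have h0 := (hx i).1
      simp only [hM, hb0, Matrix.of_apply, if_pos hi]
      rw [max_eq_left] <;> linarith
    · have hlt : x ⟨(i : ℕ) - 1, Nat.lt_of_le_of_lt (Nat.pred_le _) i.isLt⟩ < x i :=
        hmono (by simp only [Fin.lt_def]; omega)
      simp only [hM, hb0, Matrix.of_apply, if_neg hi]
      rw [max_eq_left] <;> linarith
  have hBT : M.BlockTriangular OrderDual.toDual := fun i j h => htri i j h
  have hdet : M.det ≠ 0 := by
    rw [Matrix.det_of_lowerTriangular M hBT]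
    exact ne_of_gt (Finset.prod_pos fun i _ => hdiag i)
  refine ⟨M⁻¹.mulVec Yv, b0, fun i => ?_⟩
  have hMv : M.mulVec (M⁻¹.mulVec Yv) = Yv := by
    rw [Matrix.mulVec_mulVec, Matrix.mul_nonsing_inv _ (isUnit_iff_ne_zero.mpr hdet),
      Matrix.one_mulVec]
  have h := congrFun hMv i
  simp only [Matrix.mulVec, dotProduct] at h
  rw [← h]
  exact Finset.sum_congr rfl fun j _ => by rw [mul_comm]; rfl

lemma aux_pad {n k : ℕ} (hnk : n ≤ k) (G : Fin n → ℝ) :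
    ∑ j : Fin k, (if h : (j : ℕ) < n then G ⟨j, h⟩ else 0) = ∑ j : Fin n, G j := by
  classical
  let f : ℕ → ℝ := fun m => if h : m < n then G ⟨m, h⟩ else 0
  have h1 : ∑ j : Fin k, (if h : (j : ℕ) < n then G ⟨j, h⟩ else 0) = ∑ m ∈ Finset.range k, f m :=
    Fin.sum_univ_eq_sum_range f k
  have h2 : ∑ m ∈ Finset.range n, f m = ∑ m ∈ Finset.range k, f m := by
    refine Finset.sum_subset (Finset.range_subset_range.mpr hnk) fun m _ hm => ?_
    simp only [Finset.mem_range] at hm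
    simp [f, hm]
  have h3 : ∑ j : Fin n, G j = ∑ m ∈ Finset.range n, f m := by
    rw [← Fin.sum_univ_eq_sum_range f n]
    exact Finset.sum_congr rfl fun j _ => by simp [f]
  rw [h1, ← h2, ← h3]

/-- Example 1: interpolation by wide two-layer ReLU networks, and exact overfitting of
least squares. For distinct points `x_1 < ⋯ < x_n` in `[0,1]` and any values, a network
`Σ_{j=1}^k a_j σ_relu(x + b_j)` with `k ≥ n + 3` interpolates them; consequently any
least-squares minimizer over this class interpolates i.i.d. `N(0,1)` responses, and
`E[(1/n) Σ_i m̂(x_i)²] = 1`. -/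
theorem statement_13
    (n k : ℕ) (hn : 0 < n) (hk : n + 3 ≤ k)
    (x : Fin n → ℝ) (hmono : StrictMono x) (hx : ∀ i, x i ∈ Set.Icc (0 : ℝ) 1)
    (Ω : Type) [MeasureSpace Ω] [IsProbabilityMeasure (ℙ : Measure Ω)]
    (Y : Fin n → Ω → ℝ) (hYm : ∀ i, Measurable (Y i))
    -- the `Y_i` are independent standard normal
    (hindep : iIndepFun Y ℙ)
    (hlaw : ∀ i, Measure.map (Y i) ℙ = gaussianReal 0 1)
    -- `m̂(x) = Σ_j â_j σ_relu(x + b̂_j)` is a least-squares minimizer over the class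
    (ahat bhat : Ω → Fin k → ℝ)
    (hmin : ∀ ω (a b : Fin k → ℝ),
      (1 / (n : ℝ)) * ∑ i : Fin n, (Y i ω - ∑ j : Fin k, ahat ω j * max (x i + bhat ω j) 0) ^ 2
        ≤ (1 / (n : ℝ)) * ∑ i : Fin n, (Y i ω - ∑ j : Fin k, a j * max (x i + b j) 0) ^ 2) :
    -- (1) interpolation of arbitrary values
    (∀ Yv : Fin n → ℝ, ∃ a b : Fin k → ℝ,
      ∀ i : Fin n, ∑ j : Fin k, a j * max (x i + b j) 0 = Yv i) ∧
    -- (2) the least-squares minimizer interpolates the data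
    (∀ ω (i : Fin n), ∑ j : Fin k, ahat ω j * max (x i + bhat ω j) 0 = Y i ω) ∧
    -- (3) the expected empirical second moment of `m̂` equals `1`
    ∫ ω, (1 / (n : ℝ)) * ∑ i : Fin n,
        (∑ j : Fin k, ahat ω j * max (x i + bhat ω j) 0) ^ 2 ∂ℙ = 1 := by
  have hnk : n ≤ k := le_trans (Nat.le_add_right n 3) hk
  -- Part 1
  have part1 : ∀ Yv : Fin n → ℝ, ∃ a b : Fin k → ℝ,
      ∀ i : Fin n, ∑ j : Fin k, a j * max (x i + b j) 0 = Yv i := by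
    intro Yv
    obtain ⟨a, b, hab⟩ := aux_interp n x hmono hx Yv
    refine ⟨fun j => if h : (j : ℕ) < n then a ⟨j, h⟩ else 0,
      fun j => if h : (j : ℕ) < n then b ⟨j, h⟩ else 0, fun i => ?_⟩
    have hterm : ∀ j : Fin k,
        (if h : (j : ℕ) < n then a ⟨j, h⟩ else 0) *
          max (x i + if h : (j : ℕ) < n then b ⟨j, h⟩ else 0) 0
        = if h : (j : ℕ) < n then a ⟨j, h⟩ * max (x i + b ⟨j, h⟩) 0 else 0 := by
      intro j
      by_cases h : (j : ℕ) < n <;> simp [h]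
    rw [Finset.sum_congr rfl fun j _ => hterm j,
      aux_pad hnk (fun j => a j * max (x i + b j) 0), hab i]
  refine ⟨part1, ?_⟩
  -- Part 2
  have part2 : ∀ ω (i : Fin n), ∑ j : Fin k, ahat ω j * max (x i + bhat ω j) 0 = Y i ω := by
    intro ω i
    obtain ⟨a, b, hab⟩ := part1 (fun i' => Y i' ω)
    have h := hmin ω a b
    have hR : ∑ i' : Fin n, (Y i' ω - ∑ j : Fin k, a j * max (x i' + b j) 0) ^ 2 = 0 :=
      Finset.sum_eq_zero fun i' _ => by rw [hab i']; ring
    rw [hR, mul_zero] at h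
    have hpos : (0:ℝ) < 1 / (n : ℝ) := by
      have : (0:ℝ) < (n : ℝ) := Nat.cast_pos.mpr hn
      positivity
    have hSnn : (0:ℝ) ≤ ∑ i' : Fin n,
        (Y i' ω - ∑ j : Fin k, ahat ω j * max (x i' + bhat ω j) 0) ^ 2 :=
      Finset.sum_nonneg fun i' _ => sq_nonneg _
    have hS : ∑ i' : Fin n,
        (Y i' ω - ∑ j : Fin k, ahat ω j * max (x i' + bhat ω j) 0) ^ 2 = 0 := by
      nlinarith [h, hpos, hSnn]
    have hterm := (Finset.sum_eq_zero_iff_of_nonneg fun i' _ => sq_nonneg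
      (Y i' ω - ∑ j : Fin k, ahat ω j * max (x i' + bhat ω j) 0)).mp hS i (Finset.mem_univ i)
    have h0 : Y i ω - ∑ j : Fin k, ahat ω j * max (x i + bhat ω j) 0 = 0 := by
      nlinarith [hterm]
    linarith
  refine ⟨part2, ?_⟩
  -- Part 3
  have hInt : ∀ i : Fin n, Integrable (fun ω => (Y i ω) ^ 2) ℙ := by
    intro i
    have hmeas : AEStronglyMeasurable (fun x : ℝ => x ^ 2) (Measure.map (Y i) ℙ) :=
      (measurable_id.pow_const 2).aestronglyMeasurable
    have hg : Integrable (fun x : ℝ => x ^ 2) (Measure.map (Y i) ℙ) := by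
      rw [hlaw i]; exact aux_integrable_sq_gauss
    have := (integrable_map_measure hmeas (hYm i).aemeasurable).mp hg
    exact this
  have hone : ∀ i : Fin n, ∫ ω, (Y i ω) ^ 2 ∂ℙ = 1 := by
    intro i
    have hmeas : AEStronglyMeasurable (fun x : ℝ => x ^ 2) (Measure.map (Y i) ℙ) :=
      (measurable_id.pow_const 2).aestronglyMeasurable
    calc ∫ ω, (Y i ω) ^ 2 ∂ℙ = ∫ y, y ^ 2 ∂(Measure.map (Y i) ℙ) :=
          (integral_map (hYm i).aemeasurable hmeas).symm
      _ = 1 := by rw [hlaw i]; exact aux_int_sq_gauss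
  have hcong : ∀ ω, (1 / (n : ℝ)) * ∑ i : Fin n,
      (∑ j : Fin k, ahat ω j * max (x i + bhat ω j) 0) ^ 2
      = (1 / (n : ℝ)) * ∑ i : Fin n, (Y i ω) ^ 2 := by
    intro ω
    congr 1
    exact Finset.sum_congr rfl fun i _ => by rw [part2 ω i]
  calc ∫ ω, (1 / (n : ℝ)) * ∑ i : Fin n,
        (∑ j : Fin k, ahat ω j * max (x i + bhat ω j) 0) ^ 2 ∂ℙ
      = ∫ ω, (1 / (n : ℝ)) * ∑ i : Fin n, (Y i ω) ^ 2 ∂ℙ :=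
        integral_congr_ae (Filter.Eventually.of_forall hcong)
    _ = (1 / (n : ℝ)) * ∫ ω, ∑ i : Fin n, (Y i ω) ^ 2 ∂ℙ := by
        rw [MeasureTheory.integral_const_mul]
    _ = (1 / (n : ℝ)) * ∑ i : Fin n, ∫ ω, (Y i ω) ^ 2 ∂ℙ := by
        rw [integral_finset_sum _ fun i _ => hInt i]
    _ = 1 := by
        simp only [hone, Finset.sum_const, Finset.card_univ, Fintype.card_fin, nsmul_eq_mul,
          mul_one]
        field_simp
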